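/- arXiv:1708.07052 — 5 statements merged into one kernel-verified Lean document; each statement's English description precedes it below -/
import Mathlib

section
/- The function J : [0,∞) × [0,1] → [0,∞] defined by J(κ,ρ) := ρ(1−ρ)·Ψ(κ/(ρ(1−ρ))) for ρ ∈ (0,1), with J(κ,0) = J(κ,1) = ∞ for κ > 0 and J(0,0) = J(0,1) = 0, is convex (jointly in (κ,ρ)). -/
open scoped ENNReal

/-- The truncated Poisson rate function `Ψ(λ) = λ log(max λ 1) − (max λ 1 − 1)`. -/
noncomputable def trPoisson (l : ℝ) : ℝ := l * Real.log (max l 1) - (max l 1 - 1)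

/-- The rate density `J(κ,ρ) = ρ(1−ρ)·Ψ(κ/(ρ(1−ρ)))`, with boundary conventions
`J(κ,0) = J(κ,1) = ∞` for `κ > 0` and `J(0,0) = J(0,1) = 0`. -/
noncomputable def rateJ (κ ρ : ℝ) : ℝ≥0∞ :=
  if ρ = 0 ∨ ρ = 1 then (if κ = 0 then 0 else ⊤)
  else ENNReal.ofReal (ρ * (1 - ρ) * trPoisson (κ / (ρ * (1 - ρ))))

/-!
For `m = ρ(1−ρ) > 0`, `m Ψ(κ/m)` is the Legendre-type transform
`sup_{α ≥ 0} (κα − m(e^α − 1))`, attained at `α = log (max (κ/m) 1)`; at the boundary `m = 0`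
the same supremum is `0` or `∞` according to `κ = 0` or `κ > 0`, exactly the boundary values of
`rateJ`. Each function `(κ, ρ) ↦ κα − ρ(1−ρ)(e^α − 1)` is convex because `ρ(1−ρ)` is concave
and `e^α − 1 ≥ 0`, and a supremum of convex functions is convex.
-/

open Real

theorem sub_mul_exp_sub_one_le_mul_trPoisson {κ m α : ℝ} (hm : 0 < m) (hα : 0 ≤ α) :
    κ * α - m * (exp α - 1) ≤ m * trPoisson (κ / m) := by
  have hκm : κ = m * (κ / m) := by field_simp
  set l := κ / m
  rw [hκm]
  unfold trPoisson
  rcases le_or_gt l 1 with hl | hl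
  · have hαexp : α ≤ exp α - 1 := by linarith [add_one_le_exp α]
    rw [max_eq_right hl, log_one]
    nlinarith [mul_le_mul_of_nonneg_right (mul_le_mul_of_nonneg_left hl hm.le) hα]
  · have hl0 : 0 < l := one_pos.trans hl
    -- tangent line of `exp` at `log l`
    have htangent : l * (α - log l + 1) ≤ exp α := by
      have := add_one_le_exp (α - log l)
      rw [exp_sub, exp_log hl0] at this
      calc l * (α - log l + 1) ≤ l * (exp α / l) := by gcongr
        _ = exp α := mul_div_cancel₀ _ hl0.ne'
    rw [max_eq_left hl.le]
    nlinarith [mul_le_mul_of_nonneg_left htangent hm.le]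

theorem exists_sub_mul_exp_sub_one_eq_mul_trPoisson (κ : ℝ) {m : ℝ} (hm : m ≠ 0) :
    ∃ α ≥ 0, κ * α - m * (exp α - 1) = m * trPoisson (κ / m) := by
  refine ⟨log (max (κ / m) 1), log_nonneg (le_max_right _ _), ?_⟩
  rw [trPoisson, exp_log (one_pos.trans_le (le_max_right _ _))]
  field_simp

theorem iSup_ofReal_mul_eq_top {κ : ℝ} (hκ : 0 < κ) :
    ⨆ α ≥ (0 : ℝ), ENNReal.ofReal (κ * α) = ⊤ := by
  refine ENNReal.eq_top_of_forall_nnreal_le fun r => ?_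
  refine le_iSup₂_of_le (r / κ : ℝ) (by positivity) ?_
  rw [mul_div_cancel₀ _ hκ.ne', ENNReal.ofReal_coe_nnreal]

theorem rateJ_eq_iSup {κ ρ : ℝ} (hκ : 0 ≤ κ) (hρ : ρ ∈ Set.Icc (0 : ℝ) 1) :
    rateJ κ ρ = ⨆ α ≥ (0 : ℝ), ENNReal.ofReal (κ * α - ρ * (1 - ρ) * (exp α - 1)) := by
  rw [rateJ]
  split_ifs with hρb hκ0
  · have hm : ρ * (1 - ρ) = 0 := by rcases hρb with rfl | rfl <;> ring
    simp [hm, hκ0]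
  · have hm : ρ * (1 - ρ) = 0 := by rcases hρb with rfl | rfl <;> ring
    simp only [hm, zero_mul, sub_zero]
    exact (iSup_ofReal_mul_eq_top (lt_of_le_of_ne hκ (Ne.symm hκ0))).symm
  · obtain ⟨hρ0, hρ1⟩ := not_or.1 hρb
    have hm : 0 < ρ * (1 - ρ) :=
      mul_pos (lt_of_le_of_ne hρ.1 (Ne.symm hρ0)) (sub_pos.2 (lt_of_le_of_ne hρ.2 hρ1))
    apply le_antisymm
    · obtain ⟨α, hα, hmax⟩ := exists_sub_mul_exp_sub_one_eq_mul_trPoisson κ hm.ne'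
      exact le_iSup₂_of_le α hα (hmax ▸ le_rfl)
    · exact iSup₂_le fun α hα =>
        ENNReal.ofReal_le_ofReal (sub_mul_exp_sub_one_le_mul_trPoisson hm hα)

theorem concaveOn_mul_one_sub : ConcaveOn ℝ Set.univ fun ρ : ℝ => ρ * (1 - ρ) := by
  refine ⟨convex_univ, fun x _ y _ a b ha hb hab => ?_⟩
  obtain rfl : b = 1 - a := by linarith
  simp only [smul_eq_mul]
  nlinarith [mul_nonneg (mul_nonneg ha hb) (sq_nonneg (x - y))]

theorem sub_mul_exp_sub_one_convex {κ₁ κ₂ ρ₁ ρ₂ t α : ℝ} (ht : t ∈ Set.Icc (0 : ℝ) 1)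
    (hα : 0 ≤ α) :
    (t * κ₁ + (1 - t) * κ₂) * α -
        (t * ρ₁ + (1 - t) * ρ₂) * (1 - (t * ρ₁ + (1 - t) * ρ₂)) * (exp α - 1) ≤
      t * (κ₁ * α - ρ₁ * (1 - ρ₁) * (exp α - 1)) +
        (1 - t) * (κ₂ * α - ρ₂ * (1 - ρ₂) * (exp α - 1)) := by
  have hconc := concaveOn_mul_one_sub.2 (Set.mem_univ ρ₁) (Set.mem_univ ρ₂) ht.1
    (sub_nonneg.2 ht.2) (add_sub_cancel t 1)
  simp only [smul_eq_mul] at hconc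
  have hexp : 0 ≤ exp α - 1 := by linarith [add_one_le_exp α]
  nlinarith [mul_le_mul_of_nonneg_right hconc hexp]

theorem ofReal_add_mul_le {s t a b : ℝ} (hs : 0 ≤ s) (ht : 0 ≤ t) :
    ENNReal.ofReal (s * a + t * b) ≤
      ENNReal.ofReal s * ENNReal.ofReal a + ENNReal.ofReal t * ENNReal.ofReal b :=
  ENNReal.ofReal_add_le.trans_eq (by rw [ENNReal.ofReal_mul hs, ENNReal.ofReal_mul ht])

/-- The function `J : [0,∞) × [0,1] → [0,∞]` is jointly convex. -/
theorem stmt2 (κ₁ κ₂ ρ₁ ρ₂ t : ℝ) (hκ₁ : 0 ≤ κ₁) (hκ₂ : 0 ≤ κ₂)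
    (hρ₁ : ρ₁ ∈ Set.Icc (0:ℝ) 1) (hρ₂ : ρ₂ ∈ Set.Icc (0:ℝ) 1)
    (ht : t ∈ Set.Icc (0:ℝ) 1) :
    rateJ (t * κ₁ + (1 - t) * κ₂) (t * ρ₁ + (1 - t) * ρ₂) ≤
      ENNReal.ofReal t * rateJ κ₁ ρ₁ + ENNReal.ofReal (1 - t) * rateJ κ₂ ρ₂ := by
  obtain ⟨ht₀, ht₁⟩ := ht
  have hκ : 0 ≤ t * κ₁ + (1 - t) * κ₂ := by
    have := sub_nonneg.2 ht₁
    positivity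
  have hρ : t * ρ₁ + (1 - t) * ρ₂ ∈ Set.Icc (0 : ℝ) 1 :=
    convex_Icc 0 1 hρ₁ hρ₂ ht₀ (sub_nonneg.2 ht₁) (add_sub_cancel t 1)
  rw [rateJ_eq_iSup hκ hρ, rateJ_eq_iSup hκ₁ hρ₁, rateJ_eq_iSup hκ₂ hρ₂]
  refine iSup₂_le fun α hα => ?_
  calc _ ≤ ENNReal.ofReal (t * (κ₁ * α - ρ₁ * (1 - ρ₁) * (exp α - 1)) +
          (1 - t) * (κ₂ * α - ρ₂ * (1 - ρ₂) * (exp α - 1))) :=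
        ENNReal.ofReal_le_ofReal (sub_mul_exp_sub_one_convex ⟨ht₀, ht₁⟩ hα)
    _ ≤ _ := ofReal_add_mul_le ht₀ (sub_nonneg.2 ht₁)
    _ ≤ _ := by gcongr <;> exact le_iSup₂_of_le α hα le_rfl
end

section
/- The function J⁽¹⁾ : [0,∞) × [0,1] → [0,∞] defined by J⁽¹⁾(κ,ρ) := min(ρ,1−ρ)·Ψ(κ/min(ρ,1−ρ)) for ρ ∈ (0,1), with appropriate boundary values (∞ for κ>0 at ρ∈{0,1}, and 0 if κ=0), is convex. -/
open scoped ENNReal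

/-- The rate density `J⁽¹⁾(κ,ρ) = min(ρ,1−ρ)·Ψ(κ/min(ρ,1−ρ))`, with boundary conventions
`J⁽¹⁾(κ,0) = J⁽¹⁾(κ,1) = ∞` for `κ > 0` and `J⁽¹⁾(0,0) = J⁽¹⁾(0,1) = 0`. -/
noncomputable def rateJ1 (κ ρ : ℝ) : ℝ≥0∞ :=
  if ρ = 0 ∨ ρ = 1 then (if κ = 0 then 0 else ⊤)
  else ENNReal.ofReal (min ρ (1 - ρ) * trPoisson (κ / min ρ (1 - ρ)))

/-!
Writing `m(ρ) = min(ρ, 1 − ρ)`, the rate density is the Legendre-type supremum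
`J⁽¹⁾(κ, ρ) = sup_{α ≥ 0} (κα − m(ρ)(e^α − 1))`, the supremum being attained at
`α = log(max(κ/m(ρ), 1))` in the interior and being `0` or `∞` on the boundary, where `m = 0`.
For each fixed `α ≥ 0` the function under the supremum is linear in `κ` and, since `m` is
concave and `e^α − 1 ≥ 0`, convex in `ρ`; a supremum of convex functions is convex.
-/

open Real

noncomputable def rateJ1Dual (α κ ρ : ℝ) : ℝ := κ * α - min ρ (1 - ρ) * (exp α - 1)

lemma mul_sub_exp_le_trPoisson (l : ℝ) {α : ℝ} (hα : 0 ≤ α) :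
    l * α - (exp α - 1) ≤ trPoisson l := by
  unfold trPoisson
  rcases le_total l 1 with hl | hl
  · rw [max_eq_right hl, log_one]
    nlinarith [add_one_le_exp α]
  · rw [max_eq_left hl]
    have hl0 : 0 < l := one_pos.trans_le hl
    have h := mul_le_mul_of_nonneg_left (add_one_le_exp (α - log l)) hl0.le
    rw [exp_sub, exp_log hl0, mul_div_cancel₀ _ hl0.ne'] at h
    linarith

lemma trPoisson_eq_mul_log_sub (l : ℝ) :
    trPoisson l = l * log (max l 1) - (exp (log (max l 1)) - 1) := by
  rw [exp_log (one_pos.trans_le (le_max_right l 1)), trPoisson]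

lemma concaveOn_min_one_sub : ConcaveOn ℝ Set.univ (fun ρ : ℝ => min ρ (1 - ρ)) :=
  (concaveOn_id convex_univ).inf ((concaveOn_const 1 convex_univ).sub (convexOn_id convex_univ))

lemma rateJ1Dual_convex_comb {α t : ℝ} (hα : 0 ≤ α) (ht : t ∈ Set.Icc (0 : ℝ) 1)
    (κ₁ κ₂ ρ₁ ρ₂ : ℝ) :
    rateJ1Dual α (t * κ₁ + (1 - t) * κ₂) (t * ρ₁ + (1 - t) * ρ₂) ≤
      t * rateJ1Dual α κ₁ ρ₁ + (1 - t) * rateJ1Dual α κ₂ ρ₂ := by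
  have hm := concaveOn_min_one_sub.2 (Set.mem_univ ρ₁) (Set.mem_univ ρ₂) ht.1
    (sub_nonneg.2 ht.2) (add_sub_cancel t 1)
  simp only [smul_eq_mul] at hm
  have hexp : 0 ≤ exp α - 1 := sub_nonneg.2 (one_le_exp hα)
  unfold rateJ1Dual
  nlinarith [mul_le_mul_of_nonneg_right hm hexp]

lemma rateJ1_eq_iSup {κ ρ : ℝ} (hκ : 0 ≤ κ) (hρ : ρ ∈ Set.Icc (0 : ℝ) 1) :
    rateJ1 κ ρ = ⨆ α ≥ 0, ENNReal.ofReal (rateJ1Dual α κ ρ) := by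
  unfold rateJ1
  split_ifs with hb hκ0
  · have hm : min ρ (1 - ρ) = 0 := by rcases hb with rfl | rfl <;> simp
    simp [rateJ1Dual, hm, hκ0]
  · have hm : min ρ (1 - ρ) = 0 := by rcases hb with rfl | rfl <;> simp
    have hκpos : 0 < κ := lt_of_le_of_ne hκ (Ne.symm hκ0)
    refine (ENNReal.eq_top_of_forall_nnreal_le fun r => ?_).symm
    refine le_iSup₂_of_le (r / κ : ℝ) (by positivity) (le_of_eq ?_)
    rw [rateJ1Dual, hm, zero_mul, sub_zero, mul_div_cancel₀ _ hκpos.ne', ENNReal.ofReal_coe_nnreal]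
  · rw [not_or] at hb
    have hm : 0 < min ρ (1 - ρ) :=
      lt_min (lt_of_le_of_ne hρ.1 (Ne.symm hb.1)) (sub_pos.2 (lt_of_le_of_ne hρ.2 hb.2))
    have hdual : ∀ α, rateJ1Dual α κ ρ =
        min ρ (1 - ρ) * (κ / min ρ (1 - ρ) * α - (exp α - 1)) := fun α => by
      rw [rateJ1Dual]; field_simp
    refine le_antisymm ?_ (iSup₂_le fun α hα => ?_)
    · refine le_iSup₂_of_le (log (max (κ / min ρ (1 - ρ)) 1))
        (log_nonneg (le_max_right _ _)) (le_of_eq ?_)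
      rw [hdual, trPoisson_eq_mul_log_sub]
    · rw [hdual]
      exact ENNReal.ofReal_le_ofReal
        (mul_le_mul_of_nonneg_left (mul_sub_exp_le_trPoisson _ hα) hm.le)

/-- The function `J⁽¹⁾ : [0,∞) × [0,1] → [0,∞]` is jointly convex. -/
theorem stmt3 (κ₁ κ₂ ρ₁ ρ₂ t : ℝ) (hκ₁ : 0 ≤ κ₁) (hκ₂ : 0 ≤ κ₂)
    (hρ₁ : ρ₁ ∈ Set.Icc (0:ℝ) 1) (hρ₂ : ρ₂ ∈ Set.Icc (0:ℝ) 1)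
    (ht : t ∈ Set.Icc (0:ℝ) 1) :
    rateJ1 (t * κ₁ + (1 - t) * κ₂) (t * ρ₁ + (1 - t) * ρ₂) ≤
      ENNReal.ofReal t * rateJ1 κ₁ ρ₁ + ENNReal.ofReal (1 - t) * rateJ1 κ₂ ρ₂ := by
  obtain ⟨ht0, ht1⟩ := ht
  have ht1' : 0 ≤ 1 - t := sub_nonneg.2 ht1
  have hρ : t * ρ₁ + (1 - t) * ρ₂ ∈ Set.Icc (0:ℝ) 1 :=
    convex_Icc 0 1 hρ₁ hρ₂ ht0 ht1' (add_sub_cancel t 1)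
  rw [rateJ1_eq_iSup (by positivity) hρ]
  refine iSup₂_le fun α hα => ?_
  calc ENNReal.ofReal (rateJ1Dual α (t * κ₁ + (1 - t) * κ₂) (t * ρ₁ + (1 - t) * ρ₂))
      ≤ ENNReal.ofReal (t * rateJ1Dual α κ₁ ρ₁ + (1 - t) * rateJ1Dual α κ₂ ρ₂) :=
        ENNReal.ofReal_le_ofReal (rateJ1Dual_convex_comb hα ⟨ht0, ht1⟩ κ₁ κ₂ ρ₁ ρ₂)
    _ ≤ ENNReal.ofReal t * ENNReal.ofReal (rateJ1Dual α κ₁ ρ₁) +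
          ENNReal.ofReal (1 - t) * ENNReal.ofReal (rateJ1Dual α κ₂ ρ₂) := by
        rw [← ENNReal.ofReal_mul ht0, ← ENNReal.ofReal_mul ht1']
        exact ENNReal.ofReal_add_le
    _ ≤ ENNReal.ofReal t * rateJ1 κ₁ ρ₁ + ENNReal.ofReal (1 - t) * rateJ1 κ₂ ρ₂ := by
        rw [rateJ1_eq_iSup hκ₁ hρ₁, rateJ1_eq_iSup hκ₂ hρ₂]
        gcongr <;> exact le_iSup₂_of_le α hα le_rfl
end

section
/- Let Ψ be the truncated Poisson rate function and c := 2r/T > 0. There exists a constant C < ∞ depending only on c such that for all λ₁, λ₂ ≥ 0 with |λ₂ − λ₁| ≤ c, one has max(Ψ(λ₁), Ψ(λ₂)) ≤ (C+1)·min(Ψ(λ₁), Ψ(λ₂)) + C. -/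
lemma psi_one_le {l : ℝ} (hl : 1 ≤ l) :
    trPoisson l = l * Real.log l - (l - 1) := by
  unfold trPoisson; rw [max_eq_left hl]

lemma psi_le_one {l : ℝ} (hl : l ≤ 1) : trPoisson l = 0 := by
  unfold trPoisson; rw [max_eq_right hl]; simp

lemma psi_nonneg (l : ℝ) : 0 ≤ trPoisson l := by
  rcases le_total l 1 with h | h
  · rw [psi_le_one h]
  · rw [psi_one_le h]
    have hl : 0 < l := lt_of_lt_of_le one_pos h
    have h1 : Real.exp (-Real.log l) = 1 / l := by
      rw [Real.exp_neg, Real.exp_log hl, one_div]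
    have h2 := Real.add_one_le_exp (-Real.log l)
    rw [h1] at h2
    have h3 : l * (-Real.log l + 1) ≤ l * (1 / l) :=
      mul_le_mul_of_nonneg_left h2 hl.le
    have h4 : l * (1 / l) = 1 := by field_simp
    nlinarith [h3, h4]

lemma psi_mono {a b : ℝ} (ha : 0 ≤ a) (hab : a ≤ b) :
    trPoisson a ≤ trPoisson b := by
  rcases le_total a 1 with h | h
  · rw [psi_le_one h]; exact psi_nonneg b
  · have hb : 1 ≤ b := le_trans h hab
    rw [psi_one_le h, psi_one_le hb]
    have ha0 : 0 < a := lt_of_lt_of_le one_pos h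
    have hb0 : 0 < b := lt_of_lt_of_le one_pos hb
    have hlog : Real.log a - Real.log b ≤ a / b - 1 := by
      have := Real.log_le_sub_one_of_pos (show 0 < a / b by positivity)
      rwa [Real.log_div ha0.ne' hb0.ne'] at this
    have h3 : b * (Real.log a - Real.log b) ≤ b * (a / b - 1) :=
      mul_le_mul_of_nonneg_left hlog hb0.le
    have h4 : b * (a / b - 1) = a - b := by field_simp
    have h5 : 0 ≤ Real.log a := Real.log_nonneg h
    nlinarith [h3, h4, h5, mul_le_mul_of_nonneg_right hab h5]

lemma le_psi_add_nine {l : ℝ} (hl : 0 ≤ l) : l ≤ trPoisson l + 9 := by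
  rcases le_total l 9 with h | h
  · have := psi_nonneg l; linarith
  · have hl1 : (1:ℝ) ≤ l := by linarith
    rw [psi_one_le hl1]
    have h9 : (2:ℝ) ≤ Real.log 9 := by
      rw [Real.le_log_iff_exp_le (by norm_num : (0:ℝ) < 9)]
      have h1 : Real.exp 2 = Real.exp 1 * Real.exp 1 := by
        rw [← Real.exp_add]; norm_num
      nlinarith [Real.exp_one_lt_d9, Real.exp_pos 1]
    have hlog : (2:ℝ) ≤ Real.log l :=
      le_trans h9 (Real.log_le_log (by norm_num) h)
    nlinarith [mul_le_mul_of_nonneg_left hlog (by linarith : (0:ℝ) ≤ l)]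

lemma psi_key {c a b : ℝ} (hc : 0 < c) (ha : 0 ≤ a) (hab : a ≤ b)
    (hbc : b ≤ a + c) :
    trPoisson b ≤ (c ^ 2 + 10 * c + 1) * trPoisson a + (c ^ 2 + 10 * c) := by
  rcases le_total a 1 with h | h
  · -- then b ≤ 1 + c, and Ψ(b) ≤ (1+c)*c
    rw [psi_le_one h]
    have hb1 : b ≤ 1 + c := by linarith
    have hmax : max b 1 ≤ 1 + c := by
      apply max_le hb1; linarith
    have hmax1 : (1:ℝ) ≤ max b 1 := le_max_right _ _
    have hlog : Real.log (max b 1) ≤ max b 1 - 1 :=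
      Real.log_le_sub_one_of_pos (by linarith)
    have hlog0 : 0 ≤ Real.log (max b 1) := Real.log_nonneg hmax1
    have hb0 : 0 ≤ b := le_trans ha hab
    have hΨ : trPoisson b ≤ b * Real.log (max b 1) := by
      unfold trPoisson; nlinarith
    have : b * Real.log (max b 1) ≤ (1 + c) * c := by
      have h1 : Real.log (max b 1) ≤ c := by linarith
      nlinarith
    nlinarith
  · -- 1 ≤ a ≤ b
    have hb : 1 ≤ b := le_trans h hab
    have ha0 : 0 < a := lt_of_lt_of_le one_pos h
    have hb0 : 0 < b := lt_of_lt_of_le one_pos hb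
    rw [psi_one_le h, psi_one_le hb]
    have hlog : Real.log b - Real.log a ≤ b / a - 1 := by
      have := Real.log_le_sub_one_of_pos (show 0 < b / a by positivity)
      rwa [Real.log_div hb0.ne' ha0.ne'] at this
    -- b * (log b - log a) ≤ b * (b/a - 1) = b*(b-a)/a ≤ c + c^2
    have h3 : b * (Real.log b - Real.log a) ≤ b * (b / a - 1) :=
      mul_le_mul_of_nonneg_left hlog hb0.le
    have h4 : b * (b / a - 1) = b * (b - a) / a := by field_simp
    have h5 : b * (b - a) / a ≤ c + c ^ 2 := by
      rw [div_le_iff₀ ha0]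
      nlinarith
    -- (b-a) * log a ≤ c * log a ≤ c * (a - 1)
    have hloga : Real.log a ≤ a - 1 := Real.log_le_sub_one_of_pos ha0
    have hloga0 : 0 ≤ Real.log a := Real.log_nonneg h
    have h6 : (b - a) * Real.log a ≤ c * Real.log a :=
      mul_le_mul_of_nonneg_right (by linarith) hloga0
    have h7 : c * Real.log a ≤ c * (a - 1) :=
      mul_le_mul_of_nonneg_left hloga hc.le
    -- a ≤ Ψ(a) + 9
    have h8 : a ≤ trPoisson a + 9 := le_psi_add_nine ha0.le
    rw [psi_one_le h] at h8
    have hpa : 0 ≤ a * Real.log a - (a - 1) := by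
      have := psi_nonneg a; rwa [psi_one_le h] at this
    -- combine
    nlinarith [h3, h4, h5, h6, h7, h8, hpa, mul_le_mul_of_nonneg_left h8 hc.le]

/-- Values of `Ψ` at two points at distance at most `c` are comparable up to
affine constants depending only on `c`. -/
theorem stmt4 (c : ℝ) (hc : 0 < c) :
    ∃ C : ℝ, ∀ l₁ l₂ : ℝ, 0 ≤ l₁ → 0 ≤ l₂ → |l₂ - l₁| ≤ c →
      max (trPoisson l₁) (trPoisson l₂) ≤
        (C + 1) * min (trPoisson l₁) (trPoisson l₂) + C := by
  refine ⟨c ^ 2 + 10 * c, fun l₁ l₂ h₁ h₂ hd => ?_⟩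
  rw [abs_le] at hd
  rcases le_total l₁ l₂ with h | h
  · have hm := psi_mono h₁ h
    rw [max_eq_right hm, min_eq_left hm]
    exact psi_key hc h₁ h (by linarith)
  · have hm := psi_mono h₂ h
    rw [max_eq_left hm, min_eq_right hm]
    exact psi_key hc h₂ h (by linarith)
end

section
/- Fix λ > 0, κ := λ·ρ(1−ρ) with ρ ∈ (0,1), and t₀ > 0, ξ₀ ∈ ℝ. Then the infimum over piecewise C¹ paths w : [0,t₀] → ℝ with w(t₀) = ξ₀ of ∫₀^{t₀} λ·φ(w'(s)/λ) ds + ρ·w(0) equals κ·t₀ + ρ·ξ₀, where φ is as in the Hopf–Lax kernel. -/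
/-- The Hopf–Lax kernel `φ`. -/
noncomputable def hlKernel (ξ : ℝ) : ℝ :=
  if ξ ≤ -1 then 0 else if ξ < 1 then (ξ + 1) ^ 2 / 4 else ξ

/-- A path is piecewise `C¹` on `[a,b]`: it is continuous, and `C¹` on each piece of
some finite partition of `[a,b]`. -/
def PiecewiseC1On (w : ℝ → ℝ) (a b : ℝ) : Prop :=
  ContinuousOn w (Set.Icc a b) ∧
  ∃ (k : ℕ) (s : Fin (k + 1) → ℝ), StrictMono s ∧ s 0 = a ∧ s (Fin.last k) = b ∧
    ∀ i : Fin k, ContDiffOn ℝ 1 w (Set.Icc (s i.castSucc) (s i.succ))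

/-! The line `ξ ↦ ρ ξ + ρ (1 - ρ)` is tangent to the convex kernel `φ` at `ξ = 2ρ - 1`, so
`λ φ (w' / λ) ≥ ρ w' + κ` pointwise. Integrating this along any piecewise `C¹` path ending at
`(t₀, ξ₀)` gives `∫₀^t₀ λ φ (w' / λ) + ρ w 0 ≥ κ t₀ + ρ ξ₀`, with equality for the
characteristic of constant speed `(2ρ - 1) λ`, i.e. at the tangency point. -/

open Set MeasureTheory

lemma hlKernel_eq_max (ξ : ℝ) :
    hlKernel ξ = max 0 (min (ξ + 1) 2) ^ 2 / 4 + max (ξ - 1) 0 := by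
  unfold hlKernel
  split_ifs with h₁ h₂
  · rw [max_eq_left (by linarith [min_le_left (ξ + 1) 2]), max_eq_right (by linarith)]
    norm_num
  · rw [min_eq_left (by linarith), max_eq_right (by linarith), max_eq_right (by linarith)]
    ring
  · rw [min_eq_right (by linarith), max_eq_right (by norm_num), max_eq_left (by linarith)]
    ring

@[fun_prop]
lemma continuous_hlKernel : Continuous hlKernel := by
  simp only [funext hlKernel_eq_max]
  fun_prop

lemma hlKernel_two_mul_sub_one {ρ : ℝ} (hρ : ρ ∈ Icc (0 : ℝ) 1) :
    hlKernel (2 * ρ - 1) = ρ ^ 2 := by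
  obtain ⟨h₀, h₁⟩ := hρ
  unfold hlKernel
  split_ifs <;> nlinarith

lemma mul_add_le_hlKernel {ρ : ℝ} (hρ : ρ ∈ Icc (0 : ℝ) 1) (ξ : ℝ) :
    ρ * ξ + ρ * (1 - ρ) ≤ hlKernel ξ := by
  obtain ⟨h₀, h₁⟩ := hρ
  unfold hlKernel
  split_ifs
  · nlinarith
  · nlinarith [sq_nonneg ((ξ + 1) / 2 - ρ)]
  · nlinarith

lemma mul_add_le_mul_hlKernel_div {lam ρ : ℝ} (hlam : 0 < lam) (hρ : ρ ∈ Icc (0 : ℝ) 1)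
    (x : ℝ) : ρ * x + lam * ρ * (1 - ρ) ≤ lam * hlKernel (x / lam) :=
  calc ρ * x + lam * ρ * (1 - ρ) = lam * (ρ * (x / lam) + ρ * (1 - ρ)) := by field_simp
    _ ≤ lam * hlKernel (x / lam) :=
      mul_le_mul_of_nonneg_left (mul_add_le_hlKernel hρ _) hlam.le

lemma deriv_ae_eq_derivWithin_Icc (w : ℝ → ℝ) (a b : ℝ) :
    deriv w =ᵐ[volume.restrict (Ioc a b)] derivWithin w (Icc a b) := by
  refine ae_restrict_of_ae_eq_of_ae_restrict Ioo_ae_eq_Ioc ?_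
  refine (ae_restrict_iff' measurableSet_Ioo).2 (Filter.Eventually.of_forall fun x hx => ?_)
  exact (derivWithin_of_mem_nhds (Icc_mem_nhds hx.1 hx.2)).symm

namespace ContDiffOn

variable {w g : ℝ → ℝ} {a b : ℝ}

lemma intervalIntegrable_comp_deriv (hw : ContDiffOn ℝ 1 w (Icc a b)) (hab : a < b)
    (hg : Continuous g) : IntervalIntegrable (fun s => g (deriv w s)) volume a b := by
  rw [intervalIntegrable_iff_integrableOn_Ioc_of_le hab.le]
  have hcont : ContinuousOn (fun s => g (derivWithin w (Icc a b) s)) (Icc a b) :=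
    hg.comp_continuousOn (hw.continuousOn_derivWithin (uniqueDiffOn_Icc hab) le_rfl)
  exact (hcont.integrableOn_Icc.mono_set Ioc_subset_Icc_self).congr
    ((deriv_ae_eq_derivWithin_Icc w a b).fun_comp g).symm

lemma integral_deriv_eq_sub_of_Icc (hw : ContDiffOn ℝ 1 w (Icc a b)) (hab : a < b) :
    ∫ s in a..b, deriv w s = w b - w a := by
  refine intervalIntegral.integral_eq_sub_of_hasDerivAt_of_le hab.le hw.continuousOn
    (fun x hx => ?_) (hw.intervalIntegrable_comp_deriv hab continuous_id)
  exact ((hw.differentiableOn one_ne_zero x (Ioo_subset_Icc_self hx)).differentiableAt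
    (Icc_mem_nhds hx.1 hx.2)).hasDerivAt

lemma affine_le_integral_comp_deriv (hw : ContDiffOn ℝ 1 w (Icc a b)) (hab : a < b)
    (hg : Continuous g) {α β : ℝ} (hαβ : ∀ x, α * x + β ≤ g x) :
    α * (w b - w a) + β * (b - a) ≤ ∫ s in a..b, g (deriv w s) :=
  calc α * (w b - w a) + β * (b - a) = ∫ s in a..b, α * deriv w s + β := by
        have hderiv : IntervalIntegrable (deriv w) volume a b :=
          hw.intervalIntegrable_comp_deriv hab continuous_id
        rw [intervalIntegral.integral_add (hderiv.const_mul α) intervalIntegrable_const,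
          intervalIntegral.integral_const_mul, hw.integral_deriv_eq_sub_of_Icc hab,
          intervalIntegral.integral_const, smul_eq_mul]
        ring
    _ ≤ ∫ s in a..b, g (deriv w s) :=
      intervalIntegral.integral_mono_on hab.le
        (hw.intervalIntegrable_comp_deriv (g := fun x => α * x + β) hab (by fun_prop))
        (hw.intervalIntegrable_comp_deriv hab hg) fun x _ => hαβ _

lemma piecewiseC1On (hw : ContDiffOn ℝ 1 w (Icc a b)) (hab : a < b) : PiecewiseC1On w a b := by
  refine ⟨hw.continuousOn, 1, ![a, b], ?_, rfl, rfl, fun i => ?_⟩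
  · exact Fin.strictMono_iff_lt_succ.2 fun i => by fin_cases i; exact hab
  · fin_cases i; exact hw

end ContDiffOn

namespace PiecewiseC1On

variable {w g : ℝ → ℝ} {a b : ℝ}

lemma exists_nat_partition (hw : PiecewiseC1On w a b) :
    ∃ (k : ℕ) (t : ℕ → ℝ), t 0 = a ∧ t k = b ∧
      ∀ i < k, t i < t (i + 1) ∧ ContDiffOn ℝ 1 w (Icc (t i) (t (i + 1))) := by
  obtain ⟨-, k, s, hs, hs₀, hsk, hC1⟩ := hw
  refine ⟨k, fun i => s (Fin.clamp i k), by simpa [Fin.clamp] using hs₀,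
    by simpa [Fin.clamp, Fin.last] using hsk, fun i hi => ?_⟩
  have hcast : Fin.clamp i k = (⟨i, hi⟩ : Fin k).castSucc := by
    simp [Fin.clamp, hi.le]
  have hsucc : Fin.clamp (i + 1) k = (⟨i, hi⟩ : Fin k).succ := by
    simp [Fin.clamp, Nat.succ_le_of_lt hi]
  simp only [hcast, hsucc]
  exact ⟨hs Fin.castSucc_lt_succ, hC1 _⟩

lemma affine_le_integral_comp_deriv (hw : PiecewiseC1On w a b) (hg : Continuous g)
    {α β : ℝ} (hαβ : ∀ x, α * x + β ≤ g x) :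
    α * (w b - w a) + β * (b - a) ≤ ∫ s in a..b, g (deriv w s) := by
  obtain ⟨k, t, rfl, rfl, ht⟩ := hw.exists_nat_partition
  rw [← intervalIntegral.sum_integral_adjacent_intervals fun i hi =>
    (ht i hi).2.intervalIntegrable_comp_deriv (ht i hi).1 hg]
  calc α * (w (t k) - w (t 0)) + β * (t k - t 0)
      = ∑ i ∈ Finset.range k, (α * (w (t (i + 1)) - w (t i)) + β * (t (i + 1) - t i)) := by
        rw [Finset.sum_add_distrib, ← Finset.mul_sum, ← Finset.mul_sum,
          Finset.sum_range_sub (fun i => w (t i)), Finset.sum_range_sub t]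
    _ ≤ _ := Finset.sum_le_sum fun i hi =>
        (ht i (Finset.mem_range.1 hi)).2.affine_le_integral_comp_deriv
          (ht i (Finset.mem_range.1 hi)).1 hg hαβ

end PiecewiseC1On

/-- With constant speed `λ` and linear initial data of slope `ρ`, the Hopf–Lax
variational problem has value `κ t₀ + ρ ξ₀`, where `κ = λ ρ (1−ρ)`. -/
theorem stmt9 (lam ρ t₀ ξ₀ : ℝ) (hlam : 0 < lam) (hρ : ρ ∈ Set.Ioo (0:ℝ) 1)
    (ht₀ : 0 < t₀) :
    IsGLB {y : ℝ | ∃ w : ℝ → ℝ, PiecewiseC1On w 0 t₀ ∧ w t₀ = ξ₀ ∧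
        y = (∫ s in (0:ℝ)..t₀, lam * hlKernel (deriv w s / lam)) + ρ * w 0}
      (lam * ρ * (1 - ρ) * t₀ + ρ * ξ₀) := by
  have hρ' : ρ ∈ Icc (0 : ℝ) 1 := Ioo_subset_Icc_self hρ
  refine IsLeast.isGLB ⟨?_, ?_⟩
  · set m := (2 * ρ - 1) * lam
    have hC1 : ContDiff ℝ 1 fun t => ξ₀ + m * (t - t₀) := by fun_prop
    have hderiv : ∀ t, deriv (fun t => ξ₀ + m * (t - t₀)) t = m := fun t => by simp
    refine ⟨_, hC1.contDiffOn.piecewiseC1On ht₀, by simp, ?_⟩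
    simp only [hderiv, mul_div_cancel_right₀ _ hlam.ne', hlKernel_two_mul_sub_one hρ',
      intervalIntegral.integral_const, smul_eq_mul, m]
    ring
  · rintro y ⟨w, hw, rfl, rfl⟩
    have := hw.affine_le_integral_comp_deriv (by fun_prop : Continuous fun x =>
      lam * hlKernel (x / lam)) (mul_add_le_mul_hlKernel_div hlam hρ')
    linarith
end

section
/- Let λ ∈ (0,Λ] be a measurable speed function bounded by Λ, f : ℝ → ℝ be 1-Lipschitz nondecreasing, and define the Hopf–Lax function h(t,ξ) := inf over piecewise C¹ paths w : [0,t] → ℝ with w(t) = ξ of ∫₀ᵗ λ(s,w(s))·φ(w'(s)/λ(s,w(s))) ds + f(w(0)). Then for all t ∈ [0,T] and ξ ≤ ξ' ∈ ℝ: 0 ≤ h(t,ξ') − h(t,ξ) ≤ ξ' − ξ. -/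
/-- The Hopf–Lax function for a space-time dependent speed `λ` and initial data `f`. -/
noncomputable def hopfLax (lam : ℝ → ℝ → ℝ) (f : ℝ → ℝ) (t ξ : ℝ) : ℝ :=
  sInf {y : ℝ | ∃ w : ℝ → ℝ, PiecewiseC1On w 0 t ∧ w t = ξ ∧
    y = (∫ s in (0:ℝ)..t, lam s (w s) * hlKernel (deriv w s / lam s (w s))) + f (w 0)}

/-!
Both inequalities follow from `h(t, ζ + δ) ≤ h(t, ζ) + max δ 0`. Given an admissible path `w`
ending at `ζ`, follow it up to a time `c` close to `t` and then run straight to `ζ + δ`. For `c`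
close enough to `t` the last segment has slope `β` with `|β| ≥ Λ ≥ λ`, and in this saturated regime
`λ φ(β / λ) = max β 0` whatever the speed is, so the segment costs `max (w t + δ - w c) 0`. The
cost of `w` on `[c, t]` dominates both `0` and `w t - w c`, hence the new path costs at most
`max δ 0` more. The lower bound `f ζ` of the admissible values comes from the same estimate
`w t - w 0 ≤ cost`, since `φ ξ ≥ ξ`.
-/

open Set MeasureTheory intervalIntegral Filter Topology

lemma hlKernel_nonneg (x : ℝ) : 0 ≤ hlKernel x := by
  unfold hlKernel; split_ifs <;> first | positivity | linarith

lemma le_hlKernel (x : ℝ) : x ≤ hlKernel x := by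
  unfold hlKernel; split_ifs <;> nlinarith [sq_nonneg (x - 1)]

lemma hlKernel_le_abs_add_one (x : ℝ) : hlKernel x ≤ |x| + 1 := by
  unfold hlKernel
  split_ifs <;> rcases abs_cases x with ⟨h, _⟩ | ⟨h, _⟩ <;> nlinarith

lemma mul_hlKernel_div_of_le_abs {u β : ℝ} (hu : 0 < u) (h : u ≤ |β|) :
    u * hlKernel (β / u) = max β 0 := by
  rcases abs_cases β with ⟨hβ, hβ0⟩ | ⟨hβ, hβ0⟩
  · have h1 : 1 ≤ β / u := (one_le_div hu).2 (by linarith)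
    rw [hlKernel, if_neg (by linarith), if_neg (by linarith), mul_div_cancel₀ _ hu.ne',
      max_eq_left hβ0]
  · have h1 : β / u ≤ -1 := by rw [div_le_iff₀ hu]; linarith
    rw [hlKernel, if_pos h1, mul_zero, max_eq_right hβ0.le]

lemma measurable_hlKernel : Measurable hlKernel :=
  Measurable.ite (measurableSet_le measurable_id measurable_const) measurable_const <|
    Measurable.ite (measurableSet_lt measurable_id measurable_const) (by fun_prop) measurable_id

namespace PiecewiseC1On

variable {w : ℝ → ℝ} {a b : ℝ}

lemma left_le (hw : PiecewiseC1On w a b) : a ≤ b := by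
  obtain ⟨-, k, s, hs, hs0, hsk, -⟩ := hw
  exact hs0 ▸ hsk ▸ hs.monotone (Fin.zero_le _)

lemma congr {w' : ℝ → ℝ} (hw : PiecewiseC1On w a b) (h : EqOn w' w (Icc a b)) :
    PiecewiseC1On w' a b := by
  obtain ⟨hc, k, s, hs, hs0, hsk, hpieces⟩ := hw
  refine ⟨hc.congr h, k, s, hs, hs0, hsk, fun i => (hpieces i).congr fun x hx => h ⟨?_, ?_⟩⟩
  · exact hs0 ▸ (hs.monotone (Fin.zero_le _)).trans hx.1
  · exact hx.2.trans (hsk ▸ hs.monotone (Fin.le_last _))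

lemma snoc {q : ℝ} (hw : PiecewiseC1On w a q) (hqb : q < b)
    (hw' : ContDiffOn ℝ 1 w (Icc q b)) : PiecewiseC1On w a b := by
  have haq := hw.left_le
  obtain ⟨hc, k, s, hs, hs0, hsk, hpieces⟩ := hw
  refine ⟨?_, k + 1, Fin.snoc s b, ?_, ?_, by simp, ?_⟩
  · rw [← Icc_union_Icc_eq_Icc haq hqb.le]
    exact hc.union_of_isClosed hw'.continuousOn isClosed_Icc isClosed_Icc
  · rw [Fin.strictMono_iff_lt_succ]
    refine Fin.lastCases ?_ fun i => ?_
    · simpa [Fin.succ_last, hsk] using hqb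
    · rw [Fin.succ_castSucc, Fin.snoc_castSucc, Fin.snoc_castSucc]
      exact hs Fin.castSucc_lt_succ
  · rw [← Fin.castSucc_zero, Fin.snoc_castSucc, hs0]
  · refine Fin.lastCases ?_ fun i => ?_
    · simpa [Fin.succ_last, hsk] using hw'
    · rw [Fin.succ_castSucc, Fin.snoc_castSucc, Fin.snoc_castSucc]
      exact hpieces i

lemma induction {P : ℝ → Prop} (h0 : P a)
    (step : ∀ q r, q < r → PiecewiseC1On w a q → ContDiffOn ℝ 1 w (Icc q r) → P q → P r)
    (hw : PiecewiseC1On w a b) : P b := by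
  obtain ⟨hc, k, s, hs, hs0, hsk, hpieces⟩ := hw
  induction k generalizing b with
  | zero => exact hsk ▸ hs0 ▸ h0
  | succ k ih =>
    have hqb : s (Fin.last k).castSucc < b := hsk ▸ hs (Fin.castSucc_lt_last _)
    have hqc : ContinuousOn w (Icc a (s (Fin.last k).castSucc)) :=
      hc.mono (Icc_subset_Icc le_rfl hqb.le)
    have hqpieces : ∀ i : Fin k, ContDiffOn ℝ 1 w
        (Icc ((s ∘ Fin.castSucc) i.castSucc) ((s ∘ Fin.castSucc) i.succ)) := fun i => by
      simpa only [Function.comp_apply, ← Fin.succ_castSucc] using hpieces i.castSucc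
    have hqs := hs.comp Fin.strictMono_castSucc
    refine step _ b hqb ⟨hqc, k, _, hqs, hs0, rfl, hqpieces⟩ ?_
      (ih hqc (s ∘ Fin.castSucc) hqs hs0 rfl hqpieces)
    simpa [hsk] using hpieces (Fin.last k)

lemma exists_lastPiece (hw : PiecewiseC1On w a b) (hab : a < b) :
    ∃ q < b, PiecewiseC1On w a q ∧ ContDiffOn ℝ 1 w (Icc q b) := by
  refine hw.induction (P := fun r => a < r → ∃ q < r, PiecewiseC1On w a q ∧
    ContDiffOn ℝ 1 w (Icc q r)) (fun h => (lt_irrefl a h).elim) ?_ hab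
  exact fun q r hqr hq hw' _ _ => ⟨q, hqr, hq, hw'⟩

end PiecewiseC1On

lemma ContDiffOn.piecewiseC1On_s11 {w : ℝ → ℝ} {a b : ℝ} (hw : ContDiffOn ℝ 1 w (Icc a b))
    (hab : a ≤ b) : PiecewiseC1On w a b := by
  have hrefl : PiecewiseC1On w a a :=
    ⟨hw.continuousOn.mono (Icc_subset_Icc le_rfl hab), 0, fun _ => a,
      Subsingleton.strictMono (α := Fin 1) _, rfl, rfl, Fin.elim0⟩
  rcases hab.eq_or_lt with rfl | hab
  · exact hrefl
  · exact hrefl.snoc hab hw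

noncomputable def runningCost (lam : ℝ → ℝ → ℝ) (w : ℝ → ℝ) (s : ℝ) : ℝ :=
  lam s (w s) * hlKernel (deriv w s / lam s (w s))

section runningCost

variable {lam : ℝ → ℝ → ℝ} {w : ℝ → ℝ}

lemma runningCost_nonneg (hpos : ∀ t ξ, 0 < lam t ξ) (s : ℝ) : 0 ≤ runningCost lam w s :=
  mul_nonneg (hpos _ _).le (hlKernel_nonneg _)

lemma deriv_le_runningCost (hpos : ∀ t ξ, 0 < lam t ξ) (s : ℝ) :
    deriv w s ≤ runningCost lam w s := by
  have hl := hpos s (w s)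
  calc deriv w s = lam s (w s) * (deriv w s / lam s (w s)) := by field_simp
    _ ≤ runningCost lam w s := mul_le_mul_of_nonneg_left (le_hlKernel _) hl.le

lemma runningCost_le (hpos : ∀ t ξ, 0 < lam t ξ) (s : ℝ) :
    runningCost lam w s ≤ |deriv w s| + lam s (w s) := by
  have hl := hpos s (w s)
  calc runningCost lam w s ≤ lam s (w s) * (|deriv w s / lam s (w s)| + 1) :=
        mul_le_mul_of_nonneg_left (hlKernel_le_abs_add_one _) hl.le
    _ = |deriv w s| + lam s (w s) := by rw [abs_div, abs_of_pos hl]; field_simp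

lemma runningCost_of_le_abs_deriv (hpos : ∀ t ξ, 0 < lam t ξ) {s : ℝ}
    (h : lam s (w s) ≤ |deriv w s|) : runningCost lam w s = max (deriv w s) 0 :=
  mul_hlKernel_div_of_le_abs (hpos s (w s)) h

lemma runningCost_congr {w' : ℝ → ℝ} {s : ℝ} (h : w' =ᶠ[𝓝 s] w) :
    runningCost lam w' s = runningCost lam w s := by
  rw [runningCost, runningCost, h.deriv_eq, h.eq_of_nhds]

lemma aemeasurable_runningCost (hmeas : Measurable (Function.uncurry lam)) {μ : Measure ℝ}
    (hw : AEMeasurable w μ) : AEMeasurable (runningCost lam w) μ := by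
  have hl : AEMeasurable (fun s => lam s (w s)) μ :=
    hmeas.comp_aemeasurable (aemeasurable_id.prodMk hw)
  exact hl.mul (measurable_hlKernel.comp_aemeasurable ((measurable_deriv w).aemeasurable.div hl))

lemma intervalIntegrable_runningCost (hmeas : Measurable (Function.uncurry lam))
    (hpos : ∀ t ξ, 0 < lam t ξ) {Λ : ℝ} (hbd : ∀ t ξ, lam t ξ ≤ Λ) {a b : ℝ}
    (hw : ContinuousOn w (uIcc a b)) (hd : IntervalIntegrable (deriv w) volume a b) :
    IntervalIntegrable (runningCost lam w) volume a b := by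
  refine (hd.abs.add (intervalIntegrable_const (c := Λ))).mono_fun' ?_ (ae_of_all _ fun s => ?_)
  · refine (aemeasurable_runningCost hmeas ?_).aestronglyMeasurable
    exact (hw.aemeasurable measurableSet_uIcc).mono_set uIoc_subset_uIcc
  · dsimp only
    rw [Real.norm_eq_abs, abs_of_nonneg (runningCost_nonneg hpos s)]
    exact (runningCost_le hpos s).trans (add_le_add_right (hbd s (w s)) _)

end runningCost

section pathCost

variable {lam : ℝ → ℝ → ℝ} {Λ : ℝ} {w : ℝ → ℝ} {a b : ℝ}

lemma ContDiffOn.intervalIntegrable_deriv (hw : ContDiffOn ℝ 1 w (Icc a b)) (hab : a ≤ b) :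
    IntervalIntegrable (deriv w) volume a b := by
  rcases hab.eq_or_lt with rfl | hab
  · exact IntervalIntegrable.refl
  have hcont := hw.continuousOn_derivWithin (uniqueDiffOn_Icc hab) le_rfl
  refine (hcont.intervalIntegrable_of_Icc hab.le).congr_uIoo ?_
  rw [uIoo_of_le hab.le]
  exact fun x hx => derivWithin_of_mem_nhds (Icc_mem_nhds hx.1 hx.2)

lemma ContDiffOn.intervalIntegrable_runningCost (hmeas : Measurable (Function.uncurry lam))
    (hpos : ∀ t ξ, 0 < lam t ξ) (hbd : ∀ t ξ, lam t ξ ≤ Λ)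
    (hw : ContDiffOn ℝ 1 w (Icc a b)) (hab : a ≤ b) :
    IntervalIntegrable (runningCost lam w) volume a b :=
  _root_.intervalIntegrable_runningCost hmeas hpos hbd
    (uIcc_of_le hab ▸ hw.continuousOn) (hw.intervalIntegrable_deriv hab)

lemma ContDiffOn.sub_le_integral_runningCost (hmeas : Measurable (Function.uncurry lam))
    (hpos : ∀ t ξ, 0 < lam t ξ) (hbd : ∀ t ξ, lam t ξ ≤ Λ)
    (hw : ContDiffOn ℝ 1 w (Icc a b)) (hab : a ≤ b) :
    w b - w a ≤ ∫ s in a..b, runningCost lam w s := by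
  have hd := hw.intervalIntegrable_deriv hab
  have hftc : ∫ s in a..b, deriv w s = w b - w a := by
    refine integral_deriv_eq_sub_uIoo (uIcc_of_le hab ▸ hw.continuousOn) (fun x hx => ?_) hd
    rw [uIoo_of_le hab] at hx
    exact (hw.differentiableOn one_ne_zero x (Ioo_subset_Icc_self hx)).differentiableAt
      (Icc_mem_nhds hx.1 hx.2)
  rw [← hftc]
  exact integral_mono_on hab hd (hw.intervalIntegrable_runningCost hmeas hpos hbd hab)
    fun s _ => deriv_le_runningCost hpos s

lemma PiecewiseC1On.intervalIntegrable_runningCost (hmeas : Measurable (Function.uncurry lam))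
    (hpos : ∀ t ξ, 0 < lam t ξ) (hbd : ∀ t ξ, lam t ξ ≤ Λ) (hw : PiecewiseC1On w a b) :
    IntervalIntegrable (runningCost lam w) volume a b :=
  hw.induction IntervalIntegrable.refl fun _ _ hqr _ hw' hq =>
    hq.trans (hw'.intervalIntegrable_runningCost hmeas hpos hbd hqr.le)

lemma PiecewiseC1On.sub_le_integral_runningCost (hmeas : Measurable (Function.uncurry lam))
    (hpos : ∀ t ξ, 0 < lam t ξ) (hbd : ∀ t ξ, lam t ξ ≤ Λ) (hw : PiecewiseC1On w a b) :
    w b - w a ≤ ∫ s in a..b, runningCost lam w s := by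
  refine hw.induction (P := fun r => w r - w a ≤ ∫ s in a..r, runningCost lam w s) (by simp)
    fun q r hqr hq hw' ih => ?_
  rw [← integral_add_adjacent_intervals (hq.intervalIntegrable_runningCost hmeas hpos hbd)
    (hw'.intervalIntegrable_runningCost hmeas hpos hbd hqr.le)]
  linarith [hw'.sub_le_integral_runningCost hmeas hpos hbd hqr.le]

end pathCost

lemma exists_mem_Ioo_mul_sub_lt_abs {w : ℝ → ℝ} {q b δ : ℝ} (Λ : ℝ) (hqb : q < b)
    (hw : ContinuousWithinAt w (Iio b) b) (hδ : δ ≠ 0) :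
    ∃ c ∈ Ioo q b, Λ * (b - c) < |w b + δ - w c| := by
  have hlim : Tendsto (fun c => |w c - w b| + Λ * (b - c)) (𝓝[<] b) (𝓝 0) := by
    have hc : Tendsto (fun c : ℝ => Λ * (b - c)) (𝓝[<] b) (𝓝 (Λ * (b - b))) :=
      ((continuous_const.mul (continuous_const.sub continuous_id)).tendsto b).mono_left
        nhdsWithin_le_nhds
    simpa using ((hw.tendsto.sub_const (w b)).abs).add hc
  obtain ⟨c, hc, hcqb⟩ :=
    ((hlim.eventually (gt_mem_nhds (abs_pos.2 hδ))).and (Ioo_mem_nhdsLT hqb)).exists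
  refine ⟨c, hcqb, ?_⟩
  have := abs_sub_abs_le_abs_sub δ (w c - w b)
  rw [show δ - (w c - w b) = w b + δ - w c by ring] at this
  linarith

lemma integral_runningCost_of_le_abs {lam : ℝ → ℝ → ℝ} {Λ : ℝ} (hpos : ∀ t ξ, 0 < lam t ξ)
    (hbd : ∀ t ξ, lam t ξ ≤ Λ) {w : ℝ → ℝ} {c b β : ℝ} (hcb : c ≤ b) (hβ : Λ ≤ |β|)
    (hw : ∀ s ∈ Ioo c b, HasDerivAt w β s) :
    ∫ s in c..b, runningCost lam w s = (b - c) * max β 0 := by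
  rw [integral_congr_Ioo_of_le hcb (g := fun _ => max β 0), intervalIntegral.integral_const,
    smul_eq_mul]
  intro s hs
  have hd := (hw s hs).deriv
  rw [runningCost_of_le_abs_deriv hpos (hd ▸ (hbd _ _).trans hβ), hd]

noncomputable def extendAffine (w : ℝ → ℝ) (c β : ℝ) (s : ℝ) : ℝ :=
  if s ≤ c then w s else w c + β * (s - c)

section extendAffine

variable {w : ℝ → ℝ} {c β : ℝ}

lemma extendAffine_of_le {s : ℝ} (hs : s ≤ c) : extendAffine w c β s = w s := if_pos hs

lemma extendAffine_of_ge {s : ℝ} (hs : c ≤ s) : extendAffine w c β s = w c + β * (s - c) := by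
  rcases hs.eq_or_lt with rfl | hs
  · simp [extendAffine]
  · exact if_neg (not_le.2 hs)

lemma hasDerivAt_extendAffine {s : ℝ} (hs : c < s) : HasDerivAt (extendAffine w c β) β s := by
  have haff : HasDerivAt (fun x => w c + β * (x - c)) β s := by
    simpa using ((hasDerivAt_id s).sub_const c).const_mul β |>.const_add (w c)
  exact haff.congr_of_eventuallyEq <|
    eventually_of_mem (Ioi_mem_nhds hs) fun x hx => extendAffine_of_ge (le_of_lt hx)

lemma contDiffOn_extendAffine {b : ℝ} : ContDiffOn ℝ 1 (extendAffine w c β) (Icc c b) :=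
  (contDiff_const.add (contDiff_const.mul (contDiff_id.sub contDiff_const))).contDiffOn.congr
    fun _ hs => extendAffine_of_ge hs.1

lemma integral_runningCost_extendAffine {lam : ℝ → ℝ → ℝ} {a : ℝ} (hac : a ≤ c) :
    ∫ s in a..c, runningCost lam (extendAffine w c β) s = ∫ s in a..c, runningCost lam w s :=
  integral_congr_Ioo_of_le hac fun _ hs => runningCost_congr <|
    eventually_of_mem (Iio_mem_nhds hs.2) fun _ hx => extendAffine_of_le (le_of_lt hx)

end extendAffine

lemma PiecewiseC1On.exists_shift_right {lam : ℝ → ℝ → ℝ} {Λ : ℝ}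
    (hmeas : Measurable (Function.uncurry lam)) (hpos : ∀ t ξ, 0 < lam t ξ)
    (hbd : ∀ t ξ, lam t ξ ≤ Λ) {w : ℝ → ℝ} {a b : ℝ} (hw : PiecewiseC1On w a b) (hab : a < b)
    (δ : ℝ) : ∃ w', PiecewiseC1On w' a b ∧ w' a = w a ∧ w' b = w b + δ ∧
      ∫ s in a..b, runningCost lam w' s ≤ (∫ s in a..b, runningCost lam w s) + max δ 0 := by
  rcases eq_or_ne δ 0 with rfl | hδ
  · exact ⟨w, hw, rfl, by simp, by simp⟩
  obtain ⟨q, hqb, hq, hqw⟩ := hw.exists_lastPiece hab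
  obtain ⟨c, ⟨hqc, hcb⟩, hsteep⟩ := exists_mem_Ioo_mul_sub_lt_abs Λ hqb
    ((hqw.continuousOn.continuousWithinAt ⟨hqb.le, le_rfl⟩).mono_of_mem_nhdsWithin
      (Icc_mem_nhdsLT hqb)) hδ
  have hac : a ≤ c := hq.left_le.trans hqc.le
  have hbc : b - c ≠ 0 := (sub_pos.2 hcb).ne'
  set β := (w b + δ - w c) / (b - c) with hβ_def
  have hβ : Λ ≤ |β| := by
    rw [abs_div, abs_of_pos (sub_pos.2 hcb), le_div_iff₀ (sub_pos.2 hcb)]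
    exact hsteep.le
  have hwc : PiecewiseC1On w a c := hq.snoc hqc (hqw.mono (Icc_subset_Icc le_rfl hcb.le))
  have hwcb : ContDiffOn ℝ 1 w (Icc c b) := hqw.mono (Icc_subset_Icc hqc.le le_rfl)
  have hw'c : PiecewiseC1On (extendAffine w c β) a c :=
    hwc.congr fun _ hs => extendAffine_of_le hs.2
  refine ⟨extendAffine w c β, hw'c.snoc hcb contDiffOn_extendAffine, extendAffine_of_le hac, ?_, ?_⟩
  · rw [extendAffine_of_ge hcb.le, hβ_def, div_mul_cancel₀ _ hbc]
    ring
  have htail : ∫ s in c..b, runningCost lam (extendAffine w c β) s = max (w b + δ - w c) 0 := by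
    rw [integral_runningCost_of_le_abs hpos hbd hcb.le hβ fun s hs => hasDerivAt_extendAffine hs.1,
      mul_max_of_nonneg _ _ (sub_pos.2 hcb).le, mul_zero, hβ_def, mul_div_cancel₀ _ hbc]
  have hwtail := hwcb.sub_le_integral_runningCost hmeas hpos hbd hcb.le
  have hwtail_nonneg : 0 ≤ ∫ s in c..b, runningCost lam w s :=
    integral_nonneg hcb.le fun s _ => runningCost_nonneg hpos s
  rw [← integral_add_adjacent_intervals
      (hw'c.intervalIntegrable_runningCost hmeas hpos hbd)
      (contDiffOn_extendAffine.intervalIntegrable_runningCost hmeas hpos hbd hcb.le),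
    ← integral_add_adjacent_intervals (hwc.intervalIntegrable_runningCost hmeas hpos hbd)
      (hwcb.intervalIntegrable_runningCost hmeas hpos hbd hcb.le),
    integral_runningCost_extendAffine hac, htail]
  have : max (w b + δ - w c) 0 ≤ (∫ s in c..b, runningCost lam w s) + max δ 0 :=
    max_le (by linarith [le_max_left δ 0]) (by linarith [le_max_right δ 0])
  linarith

lemma apply_le_apply_add_max_sub {f : ℝ → ℝ}
    (hf : ∀ ξ ξ' : ℝ, ξ ≤ ξ' → 0 ≤ f ξ' - f ξ ∧ f ξ' - f ξ ≤ ξ' - ξ) (x y : ℝ) :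
    f y ≤ f x + max (y - x) 0 := by
  rcases le_total x y with h | h
  · linarith [(hf x y h).2, le_max_left (y - x) 0]
  · linarith [(hf y x h).1, le_max_right (y - x) 0]

def hopfLaxValues (lam : ℝ → ℝ → ℝ) (f : ℝ → ℝ) (t ζ : ℝ) : Set ℝ :=
  {y | ∃ w : ℝ → ℝ, PiecewiseC1On w 0 t ∧ w t = ζ ∧
    y = (∫ s in (0:ℝ)..t, runningCost lam w s) + f (w 0)}

section hopfLax

variable {lam : ℝ → ℝ → ℝ} {Λ : ℝ} {f : ℝ → ℝ} {t : ℝ}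

lemma hopfLax_eq_sInf (ζ : ℝ) : hopfLax lam f t ζ = sInf (hopfLaxValues lam f t ζ) := rfl

lemma hopfLaxValues_nonempty (ht : 0 ≤ t) (ζ : ℝ) : (hopfLaxValues lam f t ζ).Nonempty :=
  ⟨_, fun _ => ζ, contDiffOn_const.piecewiseC1On_s11 ht, rfl, rfl⟩

lemma apply_mem_lowerBounds_hopfLaxValues (hmeas : Measurable (Function.uncurry lam))
    (hpos : ∀ t ξ, 0 < lam t ξ) (hbd : ∀ t ξ, lam t ξ ≤ Λ)
    (hf : ∀ ξ ξ' : ℝ, ξ ≤ ξ' → 0 ≤ f ξ' - f ξ ∧ f ξ' - f ξ ≤ ξ' - ξ) (ζ : ℝ) :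
    f ζ ∈ lowerBounds (hopfLaxValues lam f t ζ) := by
  rintro _ ⟨w, hw, rfl, rfl⟩
  have hcost := hw.sub_le_integral_runningCost hmeas hpos hbd
  have hcost_nonneg : 0 ≤ ∫ s in (0:ℝ)..t, runningCost lam w s :=
    integral_nonneg hw.left_le fun s _ => runningCost_nonneg hpos s
  have := apply_le_apply_add_max_sub hf (w 0) (w t)
  have : max (w t - w 0) 0 ≤ ∫ s in (0:ℝ)..t, runningCost lam w s := max_le hcost hcost_nonneg
  linarith

lemma hopfLax_zero (ζ : ℝ) : hopfLax lam f 0 ζ = f ζ := by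
  have : hopfLaxValues lam f 0 ζ = {f ζ} := by
    ext y
    constructor
    · rintro ⟨w, -, rfl, rfl⟩
      simp
    · rintro rfl
      exact ⟨fun _ => ζ, contDiffOn_const.piecewiseC1On_s11 le_rfl, rfl, by simp⟩
  rw [hopfLax_eq_sInf, this, csInf_singleton]

lemma hopfLax_add_le (hmeas : Measurable (Function.uncurry lam))
    (hpos : ∀ t ξ, 0 < lam t ξ) (hbd : ∀ t ξ, lam t ξ ≤ Λ)
    (hf : ∀ ξ ξ' : ℝ, ξ ≤ ξ' → 0 ≤ f ξ' - f ξ ∧ f ξ' - f ξ ≤ ξ' - ξ) (ht : 0 ≤ t) (ζ δ : ℝ) :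
    hopfLax lam f t (ζ + δ) ≤ hopfLax lam f t ζ + max δ 0 := by
  rcases ht.eq_or_lt with rfl | ht
  · simpa [hopfLax_zero] using apply_le_apply_add_max_sub hf ζ (ζ + δ)
  rw [hopfLax_eq_sInf, hopfLax_eq_sInf, ← sub_le_iff_le_add]
  refine le_csInf (hopfLaxValues_nonempty ht.le ζ) ?_
  rintro _ ⟨w, hw, rfl, rfl⟩
  obtain ⟨w', hw', hw'0, hw't, hcost⟩ := hw.exists_shift_right hmeas hpos hbd ht δ
  have := csInf_le ⟨_, apply_mem_lowerBounds_hopfLaxValues hmeas hpos hbd hf _⟩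
    (⟨w', hw', hw't, rfl⟩ : _ ∈ hopfLaxValues lam f t (w t + δ))
  rw [hw'0] at this
  linarith

end hopfLax

theorem stmt11_general (T Λ : ℝ) (lam : ℝ → ℝ → ℝ)
    (hmeas : Measurable (Function.uncurry lam))
    (hpos : ∀ t ξ, 0 < lam t ξ) (hbd : ∀ t ξ, lam t ξ ≤ Λ)
    (f : ℝ → ℝ) (hf : ∀ ξ ξ' : ℝ, ξ ≤ ξ' → 0 ≤ f ξ' - f ξ ∧ f ξ' - f ξ ≤ ξ' - ξ) :
    ∀ t ∈ Set.Icc (0:ℝ) T, ∀ ξ ξ' : ℝ, ξ ≤ ξ' →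
      0 ≤ hopfLax lam f t ξ' - hopfLax lam f t ξ ∧
        hopfLax lam f t ξ' - hopfLax lam f t ξ ≤ ξ' - ξ := by
  intro t ht ξ ξ' hξ
  have hmono := hopfLax_add_le hmeas hpos hbd hf ht.1 ξ' (ξ - ξ')
  have hlip := hopfLax_add_le hmeas hpos hbd hf ht.1 ξ (ξ' - ξ)
  rw [add_sub_cancel, max_eq_right (sub_nonpos.2 hξ)] at hmono
  rw [add_sub_cancel, max_eq_left (sub_nonneg.2 hξ)] at hlip
  constructor <;> linarith

/-- Spatial 1-Lipschitz monotone property of the Hopf–Lax semigroup. -/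
theorem stmt11 (T Λ : ℝ) (hT : 0 < T) (hΛ : 0 < Λ) (lam : ℝ → ℝ → ℝ)
    (hmeas : Measurable (Function.uncurry lam))
    (hpos : ∀ t ξ, 0 < lam t ξ) (hbd : ∀ t ξ, lam t ξ ≤ Λ)
    (f : ℝ → ℝ) (hf : ∀ ξ ξ' : ℝ, ξ ≤ ξ' → 0 ≤ f ξ' - f ξ ∧ f ξ' - f ξ ≤ ξ' - ξ) :
    ∀ t ∈ Set.Icc (0:ℝ) T, ∀ ξ ξ' : ℝ, ξ ≤ ξ' →
      0 ≤ hopfLax lam f t ξ' - hopfLax lam f t ξ ∧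
        hopfLax lam f t ξ' - hopfLax lam f t ξ ≤ ξ' - ξ :=
  stmt11_general T Λ lam hmeas hpos hbd f hf
end
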